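/- In the setting of the slope factorization of shuffle algebras (pairings and projections as above), for all F ∈ S⁻_{(-∞,p)} and F' ∈ S^≤, one has [FF']_{<p} = F · [F']_{<p}, where [F']_{<p} ∈ S⁻_{(-∞,p)} is the unique element with ⟨X, [F']_{<p}⟩ = ⟨X, F'⟩ for all X ∈ S⁺_{(-∞,p)}. -/

import Mathlib

/-!
Both sides lie in `B₁`, so by non-degeneracy it suffices to pair them with `x ∈ A₁`.
By the bialgebra axiom `⟨x, F F'⟩ = ⟨x₁, F⟩⟨x₂, F'⟩`, and since the second legs `x₂` of
`Δx` lie in `A₁`, the factor `⟨x₂, F'⟩` may be replaced by `⟨x₂, [F']_{<p}⟩`.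
-/

open TensorProduct

/-- `pair2 p (a₁ ⊗ a₂) (b₁ ⊗ b₂) = ⟨a₁,b₁⟩⟨a₂,b₂⟩`. -/
noncomputable def pair2 {K A B : Type*} [CommRing K] [AddCommGroup A] [Module K A]
    [AddCommGroup B] [Module K B] (p : A →ₗ[K] Module.Dual K B) :
    A ⊗[K] A →ₗ[K] Module.Dual K (B ⊗[K] B) :=
  (TensorProduct.dualDistrib K B B) ∘ₗ (TensorProduct.map p p)

/-- `pair2' p (b₁ ⊗ b₂) (a₁ ⊗ a₂) = ⟨a₁,b₁⟩⟨a₂,b₂⟩`. -/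
noncomputable def pair2' {K A B : Type*} [CommRing K] [AddCommGroup A] [Module K A]
    [AddCommGroup B] [Module K B] (p : A →ₗ[K] Module.Dual K B) :
    B ⊗[K] B →ₗ[K] Module.Dual K (A ⊗[K] A) :=
  (TensorProduct.dualDistrib K A A) ∘ₗ (TensorProduct.map p.flip p.flip)

section Pairing

variable {K A B : Type*} [CommRing K] [AddCommGroup A] [Module K A]
    [AddCommGroup B] [Module K B] (p : A →ₗ[K] Module.Dual K B)

@[simp]
theorem pair2_tmul_tmul (a a' : A) (b b' : B) :
    pair2 p (a ⊗ₜ a') (b ⊗ₜ b') = p a b * p a' b' := by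
  simp [pair2]

theorem pair2_tmul_congr_right (S : Submodule K A) {y y' : B}
    (h : ∀ a ∈ S, p a y = p a y') {t : A ⊗[K] A}
    (ht : t ∈ LinearMap.range (map LinearMap.id S.subtype)) (b : B) :
    pair2 p t (b ⊗ₜ y) = pair2 p t (b ⊗ₜ y') := by
  obtain ⟨u, rfl⟩ := ht
  induction u using TensorProduct.induction_on with
  | zero => simp
  | tmul a s => simp [h s s.2]
  | add u v hu hv => simp only [map_add, LinearMap.add_apply, hu, hv]

theorem eq_of_forall_pair_eq {S : Set A} {T : Submodule K B}
    (hnondeg : ∀ y ∈ T, (∀ x ∈ S, p x y = 0) → y = 0) {y y' : B} (hy : y ∈ T)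
    (hy' : y' ∈ T) (h : ∀ x ∈ S, p x y = p x y') : y = y' :=
  sub_eq_zero.mp <| hnondeg _ (T.sub_mem hy hy') fun x hx => by
    rw [map_sub, h x hx, sub_self]

end Pairing

theorem projection_lt_left_multiplicative_general
    {K A B : Type*} [Field K] [Ring A] [Ring B]
    [Bialgebra K A] [Bialgebra K B]
    (p : A →ₗ[K] Module.Dual K B)
    -- bialgebra pairing axioms
    (hpair1 : ∀ (a : A) (b b' : B),
      p a (b * b') = pair2 p (Coalgebra.comul (R := K) a) (b ⊗ₜ[K] b'))
    -- slope subalgebras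
    (A1 : Subalgebra K A) (B1 : Subalgebra K B)
    -- the coproduct of an element of A₁ = S⁺_{(-∞,p)} has second tensor legs in A₁
    (hΔA1 : ∀ e ∈ A1, Coalgebra.comul (R := K) e ∈
      LinearMap.range (TensorProduct.map (LinearMap.id (R := K) (M := A))
        A1.toSubmodule.subtype))
    -- the restricted pairing A₁ ⊗ B₁ → K is non-degenerate
    (hnondeg : ∀ y ∈ B1, (∀ x ∈ A1, p x y = 0) → y = 0)
    -- the projection [·]_{<p} : S^≤ → S⁻_{(-∞,p)}
    (πlt : B →ₗ[K] B)
    (hπmem : ∀ y : B, πlt y ∈ B1)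
    (hπpair : ∀ y : B, ∀ x ∈ A1, p x (πlt y) = p x y) :
    ∀ F ∈ B1, ∀ (F' : B), πlt (F * F') = F * πlt F' := by
  intro F hF F'
  refine eq_of_forall_pair_eq p (T := B1.toSubmodule) hnondeg (hπmem _)
    (B1.mul_mem hF (hπmem F')) fun x hx => ?_
  rw [hπpair _ x hx, hpair1, hpair1,
    pair2_tmul_congr_right p A1.toSubmodule (fun a ha => (hπpair F' a ha).symm) (hΔA1 x hx)]

theorem projection_lt_left_multiplicative
    {K A B : Type*} [Field K] [Ring A] [Ring B]
    [Bialgebra K A] [Bialgebra K B]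
    (p : A →ₗ[K] Module.Dual K B)
    -- bialgebra pairing axioms
    (hpair1 : ∀ (a : A) (b b' : B),
      p a (b * b') = pair2 p (Coalgebra.comul (R := K) a) (b ⊗ₜ[K] b'))
    (hpair2 : ∀ (a a' : A) (b : B),
      p (a * a') b = pair2' p (Coalgebra.comul (R := K) b) (a' ⊗ₜ[K] a))
    -- slope subalgebras
    (A1 A2 : Subalgebra K A) (B1 B2 : Subalgebra K B)
    -- mixed-slope pairings are given by counits (eqn (epsilon))
    (hmix1 : ∀ e ∈ A2, ∀ f ∈ B1,
      p e f = Coalgebra.counit (R := K) e * Coalgebra.counit (R := K) f)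
    (hmix2 : ∀ e ∈ A1, ∀ f ∈ B2,
      p e f = Coalgebra.counit (R := K) e * Coalgebra.counit (R := K) f)
    -- the coproduct of an element of A₁ = S⁺_{(-∞,p)} has second tensor legs in A₁
    (hΔA1 : ∀ e ∈ A1, Coalgebra.comul (R := K) e ∈
      LinearMap.range (TensorProduct.map (LinearMap.id (R := K) (M := A))
        A1.toSubmodule.subtype))
    -- the restricted pairing A₁ ⊗ B₁ → K is non-degenerate
    (hnondeg : ∀ y ∈ B1, (∀ x ∈ A1, p x y = 0) → y = 0)
    -- the projection [·]_{<p} : S^≤ → S⁻_{(-∞,p)}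
    (πlt : B →ₗ[K] B)
    (hπmem : ∀ y : B, πlt y ∈ B1)
    (hπpair : ∀ y : B, ∀ x ∈ A1, p x (πlt y) = p x y) :
    ∀ F ∈ B1, ∀ (F' : B), πlt (F * F') = F * πlt F' :=
  projection_lt_left_multiplicative_general p hpair1 A1 B1 hΔA1 hnondeg πlt hπmem hπpair
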